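/- arXiv:1610.04275 — 2 statements merged into one kernel-verified Lean document; each statement's English description precedes it below -/
import Mathlib

section
/- Let A be a graded skew PBW extension of the ℕ-graded K-algebra R, with generators x₁,…,xₙ, and let (Aₚ)_{p∈ℕ} be the subspaces defined in the context. Then 1 ∈ A₀ and Aₚ·A_q ⊆ A_{p+q} for all p, q ∈ ℕ; hence, together with the direct sum decomposition A = ⊕_{p≥0} Aₚ, the family (Aₚ) makes A an ℕ-graded K-algebra, and moreover A is a graded left R-module for this grading, i.e. Rₜ·Aₚ ⊆ A_{t+p} for all t, p ∈ ℕ. -/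
noncomputable section

open scoped BigOperators

/-- The monomial `x₁^{α₁} ⋯ xₙ^{αₙ}` with factors in increasing index order. -/
def pbwMonomial {A : Type*} [Ring A] {n : ℕ} (x : Fin n → A) (α : Fin n → ℕ) : A :=
  (List.ofFn fun i => x i ^ α i).prod

/-- `A` is a skew PBW extension of the `K`-subalgebra `R` with generators `x i`. -/
structure IsSkewPBWExtension (K : Type*) {A : Type*} [Field K] [Ring A] [Algebra K A]
    (R : Subalgebra K A) {n : ℕ} (x : Fin n → A) : Prop where
  isBasis : ∃ b : Module.Basis (Fin n → ℕ) R A, ∀ α, (b α : A) = pbwMonomial x α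
  coeff_comm : ∀ i : Fin n, ∀ r ∈ R, r ≠ 0 →
    ∃ c ∈ R, c ≠ 0 ∧ x i * r - c * x i ∈ R
  gens_comm : ∀ i j : Fin n, ∃ c ∈ R, c ≠ 0 ∧
    ∃ r0 ∈ R, ∃ rr : Fin n → A, (∀ k, rr k ∈ R) ∧
      x j * x i - c * (x i * x j) = r0 + ∑ k, rr k * x k

/-- `A` is a graded skew PBW extension of the ℕ-graded algebra `R`,
whose grading is given by the family `RG` of `K`-subspaces of `A`. -/
structure IsGradedSkewPBWExtension (K : Type*) {A : Type*} [Field K] [Ring A] [Algebra K A]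
    (R : Subalgebra K A) (RG : ℕ → Submodule K A) {n : ℕ} (x : Fin n → A)
    extends IsSkewPBWExtension K R x : Prop where
  grading_le : ∀ p, RG p ≤ Subalgebra.toSubmodule R
  grading_sup : (⨆ p, RG p) = Subalgebra.toSubmodule R
  grading_indep : iSupIndep RG
  grading_one : (1 : A) ∈ RG 0
  grading_mul : ∀ p q : ℕ, ∀ a ∈ RG p, ∀ b ∈ RG q, a * b ∈ RG (p + q)
  sigma_delta : ∀ i : Fin n, ∃ σ : R →+* R, Function.Bijective σ ∧
    (∀ p : ℕ, ∀ r : R, (r : A) ∈ RG p → ((σ r : A) ∈ RG p)) ∧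
    ∃ δ : R → R,
      (∀ r s : R, δ (r + s) = δ r + δ s) ∧
      (∀ r s : R, δ (r * s) = σ r * δ s + δ r * s) ∧
      (∀ p : ℕ, ∀ r : R, (r : A) ∈ RG p → ((δ r : A) ∈ RG (p + 1))) ∧
      (∀ r : R, x i * (r : A) = (σ r : A) * x i + (δ r : A))
  gens_comm_graded : ∀ i j : Fin n, ∃ c : R, IsUnit c ∧ (c : A) ∈ RG 0 ∧
    ∃ r0 ∈ RG 2, ∃ rr : Fin n → A, (∀ k, rr k ∈ RG 1) ∧
      x j * x i - (c : A) * (x i * x j) = r0 + ∑ k, rr k * x k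

/-- The `p`-th graded component of a graded skew PBW extension: the `K`-span of the
elements `r · x^α` with `r ∈ R_t` and `t + |α| = p`. -/
def gradedPart (K : Type*) {A : Type*} [Field K] [Ring A] [Algebra K A]
    (RG : ℕ → Submodule K A) {n : ℕ} (x : Fin n → A) (p : ℕ) : Submodule K A :=
  Submodule.span K
    {a : A | ∃ (t : ℕ) (α : Fin n → ℕ), ∃ r ∈ RG t, t + (∑ i, α i) = p ∧ a = r * pbwMonomial x α}

/-!
Everything reduces to `x i · A_q ⊆ A_{q+1}`. Writing `r x^γ ∈ A_q` with `r ∈ R_t`, the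
relation `x i r = σᵢ(r) x i + δᵢ(r)` reduces this to `x i x^γ ∈ A_{|γ|+1}` for `|γ| ≤ q`.
For a monomial `x^β`, induct on `(|β|, i)` lexicographically: if `β` vanishes below `i`, then
`x i x^β` is again a standard monomial; otherwise `x^β = x j x^γ` with `j < i` the first index
where `β` is nonzero, and `x i x j = c x j x i + r₀ + ∑ r_k x k` (with `c ∈ R₀`, `r₀ ∈ R₂`,
`r_k ∈ R₁`) expresses `x i x^β` through `x k x^γ` with `|γ| < |β|` and `x j · A_{|β|}`
with `j < i`. Then `x^α · A_q ⊆ A_{|α|+q}`, and `A_p A_q ⊆ A_{p+q}` since `R` is graded.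
-/

theorem pow_mul_mem_of_mul_mem {M : Type*} [Monoid M] (S : ℕ → Set M) {y : M}
    (hy : ∀ q, ∀ b ∈ S q, y * b ∈ S (q + 1)) (k : ℕ) :
    ∀ q, ∀ b ∈ S q, y ^ k * b ∈ S (k + q) := by
  induction k with
  | zero => simp
  | succ k ih =>
    intro q b hb
    rw [pow_succ, mul_assoc, add_right_comm, add_assoc]
    exact ih _ _ (hy q b hb)

theorem List.prod_ofFn_mul_mem_of_mul_mem {M : Type*} [Monoid M] (S : ℕ → Set M) :
    ∀ {m : ℕ} (f : Fin m → M) (d : Fin m → ℕ),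
      (∀ i, ∀ q, ∀ b ∈ S q, f i * b ∈ S (d i + q)) →
      ∀ q, ∀ b ∈ S q, (List.ofFn f).prod * b ∈ S (∑ i, d i + q)
  | 0, _, _, _ => by simp
  | m + 1, f, d, hf => by
    intro q b hb
    rw [List.ofFn_succ, List.prod_cons, mul_assoc, Fin.sum_univ_succ, add_assoc]
    exact hf 0 _ _ (List.prod_ofFn_mul_mem_of_mul_mem S (fun i => f i.succ) (fun i => d i.succ)
      (fun i => hf i.succ) q b hb)

theorem exists_eq_add_single_of_ne_zero {n : ℕ} {β : Fin n → ℕ} {k : Fin n} (hk : β k ≠ 0) :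
    ∃ j ≤ k, ∃ γ : Fin n → ℕ, (∀ l < j, γ l = 0) ∧ β = γ + Pi.single j 1 := by
  obtain ⟨j, hj, hmin⟩ := wellFounded_lt.has_min {l | β l ≠ 0} ⟨k, hk⟩
  refine ⟨j, not_lt.mp (hmin k hk), Function.update β j (β j - 1), fun l hl => ?_, ?_⟩
  · rw [Function.update_of_ne hl.ne]
    by_contra hl'
    exact hmin l hl' hl
  · funext l
    rcases eq_or_ne l j with rfl | hl
    · simp only [Pi.add_apply, Function.update_self, Pi.single_eq_same]
      have : β l ≠ 0 := hj
      omega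
    · simp [hl]

section PBWMonomial

variable {A : Type*} [Ring A]

@[simp]
theorem pbwMonomial_zero {n : ℕ} (x : Fin n → A) : pbwMonomial x 0 = 1 := by
  simp [pbwMonomial]

theorem mul_pbwMonomial_of_forall_lt_eq_zero :
    ∀ {n : ℕ} (x : Fin n → A) {γ : Fin n → ℕ} {j : Fin n}, (∀ k < j, γ k = 0) →
      x j * pbwMonomial x γ = pbwMonomial x (γ + Pi.single j 1)
  | 0, _, _, j, _ => j.elim0
  | n + 1, x, γ, j, hγ => by
    simp only [pbwMonomial, List.ofFn_succ, List.prod_cons]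
    rcases Fin.eq_zero_or_eq_succ j with rfl | ⟨j, rfl⟩
    · simp [pow_succ', mul_assoc]
    · have htail := mul_pbwMonomial_of_forall_lt_eq_zero (fun k => x k.succ)
        (γ := fun k => γ k.succ) (j := j) (fun k hk => hγ k.succ (Fin.succ_lt_succ_iff.mpr hk))
      simp only [pbwMonomial] at htail
      rw [hγ 0 (Fin.succ_pos j), pow_zero, one_mul, htail]
      simp [Pi.single_apply, hγ 0 (Fin.succ_pos j)]

end PBWMonomial

section GradedPart

variable {K A : Type*} [Field K] [Ring A] [Algebra K A] (RG : ℕ → Submodule K A) {n : ℕ}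
  (x : Fin n → A)

theorem mul_pbwMonomial_mem_gradedPart {t p : ℕ} {α : Fin n → ℕ} {r : A} (hr : r ∈ RG t)
    (hp : t + ∑ i, α i = p) : r * pbwMonomial x α ∈ gradedPart K RG x p :=
  Submodule.subset_span ⟨t, α, r, hr, hp, rfl⟩

theorem gradedPart_le {p : ℕ} {M : Submodule K A}
    (hM : ∀ t α, ∀ r ∈ RG t, t + ∑ i, α i = p → r * pbwMonomial x α ∈ M) :
    gradedPart K RG x p ≤ M :=
  Submodule.span_le.mpr <| by
    rintro _ ⟨t, α, r, hr, hp, rfl⟩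
    exact hM t α r hr hp

theorem mul_mem_gradedPart [SetLike.GradedMul RG] {t p : ℕ} {r a : A} (hr : r ∈ RG t)
    (ha : a ∈ gradedPart K RG x p) : r * a ∈ gradedPart K RG x (t + p) := by
  refine gradedPart_le RG x (M := (gradedPart K RG x (t + p)).comap (LinearMap.mulLeft K r))
    (fun u α s hs hu => ?_) ha
  rw [Submodule.mem_comap, LinearMap.mulLeft_apply, ← mul_assoc]
  exact mul_pbwMonomial_mem_gradedPart RG x (SetLike.mul_mem_graded hr hs) (by omega)

end GradedPart

namespace IsGradedSkewPBWExtension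

variable {K A : Type*} [Field K] [Ring A] [Algebra K A] {R : Subalgebra K A}
  {RG : ℕ → Submodule K A} {n : ℕ} {x : Fin n → A}

theorem gradedMonoid (h : IsGradedSkewPBWExtension K R RG x) :
    SetLike.GradedMonoid RG where
  one_mem := h.grading_one
  mul_mem p q _ _ ha hb := h.grading_mul p q _ ha _ hb

theorem gen_mul_mem_gradedPart_of_forall_pbwMonomial
    (h : IsGradedSkewPBWExtension K R RG x) (j : Fin n) {d : ℕ}
    (hmon : ∀ γ : Fin n → ℕ, ∑ k, γ k ≤ d →
      x j * pbwMonomial x γ ∈ gradedPart K RG x (∑ k, γ k + 1))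
    {a : A} (ha : a ∈ gradedPart K RG x d) : x j * a ∈ gradedPart K RG x (d + 1) := by
  have := h.gradedMonoid
  refine gradedPart_le RG x (M := (gradedPart K RG x (d + 1)).comap (LinearMap.mulLeft K (x j)))
    (fun t γ s hs hd => ?_) ha
  obtain ⟨σ, -, hσ, δ, -, -, hδ, hxσδ⟩ := h.sigma_delta j
  let s' : R := ⟨s, h.grading_le t hs⟩
  have hsplit : x j * (s * pbwMonomial x γ) =
      (σ s' : A) * (x j * pbwMonomial x γ) + (δ s' : A) * pbwMonomial x γ := by
    rw [← mul_assoc, hxσδ s', add_mul, mul_assoc]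
  rw [Submodule.mem_comap, LinearMap.mulLeft_apply, hsplit]
  refine add_mem ?_ (mul_pbwMonomial_mem_gradedPart RG x (hδ t s' hs) (by omega))
  have := mul_mem_gradedPart RG x (hσ t s' hs) (hmon γ (by omega))
  rwa [show t + (∑ k, γ k + 1) = d + 1 by omega] at this

theorem gen_mul_pbwMonomial_mem_gradedPart (h : IsGradedSkewPBWExtension K R RG x)
    (i : Fin n) (β : Fin n → ℕ) :
    x i * pbwMonomial x β ∈ gradedPart K RG x (∑ k, β k + 1) := by
  have := h.gradedMonoid
  suffices ∀ d, ∀ i, ∀ β : Fin n → ℕ, ∑ k, β k = d →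
      x i * pbwMonomial x β ∈ gradedPart K RG x (d + 1) from this _ i β rfl
  intro d
  induction d using Nat.strong_induction_on with | _ d ihd => ?_
  intro i
  induction i using WellFoundedLT.induction with | _ i ihi => ?_
  intro β hβ
  by_cases hfirst : ∀ k < i, β k = 0
  · rw [mul_pbwMonomial_of_forall_lt_eq_zero x hfirst, ← one_mul (pbwMonomial x _)]
    exact mul_pbwMonomial_mem_gradedPart RG x h.grading_one
      (by simp [Finset.sum_add_distrib, hβ])
  obtain ⟨k, hki, hk⟩ := not_forall₂.mp hfirst
  obtain ⟨j, hjk, γ, hγ, rfl⟩ := exists_eq_add_single_of_ne_zero hk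
  have hγd : ∑ l, γ l + 1 = d := by simpa [Finset.sum_add_distrib] using hβ
  obtain ⟨c, -, hc, r₀, hr₀, r, hr, hrel⟩ := h.gens_comm_graded j i
  have hexpand : x i * pbwMonomial x (γ + Pi.single j 1) =
      r₀ * pbwMonomial x γ + ∑ l, r l * (x l * pbwMonomial x γ) +
        (c : A) * (x j * (x i * pbwMonomial x γ)) := by
    rw [← mul_pbwMonomial_of_forall_lt_eq_zero x hγ, ← mul_assoc, eq_add_of_sub_eq' hrel]
    simp only [add_mul, Finset.sum_mul, mul_assoc]
    abel
  have hxγ : ∀ l, x l * pbwMonomial x γ ∈ gradedPart K RG x d := fun l =>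
    hγd ▸ ihd _ (by omega) l γ rfl
  rw [hexpand]
  refine add_mem (add_mem ?_ (Submodule.sum_mem _ fun l _ => ?_)) ?_
  · exact mul_pbwMonomial_mem_gradedPart RG x hr₀ (by omega)
  · have := mul_mem_gradedPart RG x (hr l) (hxγ l)
    rwa [add_comm 1 d] at this
  · have hji : j < i := lt_of_le_of_lt hjk hki
    have hxj := h.gen_mul_mem_gradedPart_of_forall_pbwMonomial j (d := d)
      (fun δ hδ => (Nat.lt_or_eq_of_le hδ).elim
        (fun hlt => ihd _ hlt j δ rfl) (fun heq => heq ▸ ihi j hji δ heq)) (hxγ i)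
    simpa using mul_mem_gradedPart RG x hc hxj

theorem gen_mul_mem_gradedPart (h : IsGradedSkewPBWExtension K R RG x) (i : Fin n) {q : ℕ}
    {a : A} (ha : a ∈ gradedPart K RG x q) : x i * a ∈ gradedPart K RG x (q + 1) :=
  h.gen_mul_mem_gradedPart_of_forall_pbwMonomial i
    (fun γ _ => h.gen_mul_pbwMonomial_mem_gradedPart i γ) ha

theorem pbwMonomial_mul_mem_gradedPart (h : IsGradedSkewPBWExtension K R RG x) (α : Fin n → ℕ)
    {q : ℕ} {b : A} (hb : b ∈ gradedPart K RG x q) :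
    pbwMonomial x α * b ∈ gradedPart K RG x (∑ i, α i + q) :=
  List.prod_ofFn_mul_mem_of_mul_mem (fun p => (gradedPart K RG x p : Set A)) _ α
    (fun i => pow_mul_mem_of_mul_mem (fun p => (gradedPart K RG x p : Set A))
      (fun _ _ => h.gen_mul_mem_gradedPart i) (α i)) q b hb

theorem gradedMonoid_gradedPart (h : IsGradedSkewPBWExtension K R RG x) :
    SetLike.GradedMonoid (gradedPart K RG x) where
  one_mem := by
    simpa using mul_pbwMonomial_mem_gradedPart RG x (α := 0) h.grading_one (by simp)
  mul_mem p q a b ha hb := by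
    have := h.gradedMonoid
    refine gradedPart_le RG x (M := (gradedPart K RG x (p + q)).comap (LinearMap.mulRight K b))
      (fun t α r hr hp => ?_) ha
    rw [Submodule.mem_comap, LinearMap.mulRight_apply, mul_assoc, ← hp, add_assoc]
    exact mul_mem_gradedPart RG x hr (h.pbwMonomial_mul_mem_gradedPart α hb)

end IsGradedSkewPBWExtension

/-- If `A` is a graded skew PBW extension of the ℕ-graded `K`-algebra `R`,
then `1 ∈ A₀`, `A_p · A_q ⊆ A_{p+q}`, so (together with the direct sum decomposition)
the family `(A_p)` makes `A` an ℕ-graded `K`-algebra; moreover `A` is a graded left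
`R`-module for this grading: `R_t · A_p ⊆ A_{t+p}`. -/
theorem gradedSkewPBW_isGradedAlgebra
    {K A : Type*} [Field K] [Ring A] [Algebra K A]
    (R : Subalgebra K A) (RG : ℕ → Submodule K A) {n : ℕ} (x : Fin n → A)
    (h : IsGradedSkewPBWExtension K R RG x) :
    (1 : A) ∈ gradedPart K RG x 0 ∧
    (∀ p q : ℕ, ∀ a ∈ gradedPart K RG x p, ∀ b ∈ gradedPart K RG x q,
      a * b ∈ gradedPart K RG x (p + q)) ∧
    (∀ t p : ℕ, ∀ r ∈ RG t, ∀ a ∈ gradedPart K RG x p,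
      r * a ∈ gradedPart K RG x (t + p)) := by
  have := h.gradedMonoid
  have := h.gradedMonoid_gradedPart
  exact ⟨SetLike.one_mem_graded _, fun p q a ha b hb => SetLike.mul_mem_graded ha hb,
    fun t p r hr a ha => mul_mem_gradedPart RG x hr ha⟩
end
end

section
/- A finite collection X₁,…,X_z of subspaces of a K-vector space W is distributive if and only if there exists a basis B of W such that for every 1 ≤ i ≤ z the set B ∩ Xᵢ is a basis of the subspace Xᵢ. -/
noncomputable section

/-- The sublattice of the lattice of `K`-subspaces of `W` generated by a set `S` of
subspaces: the smallest collection of subspaces containing `S` and closed under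
intersection and sum. -/
def sublatticeGen {K W : Type*} [Field K] [AddCommGroup W] [Module K W]
    (S : Set (Submodule K W)) : Set (Submodule K W) :=
  ⋂₀ {T : Set (Submodule K W) | S ⊆ T ∧
    (∀ a ∈ T, ∀ b ∈ T, a ⊓ b ∈ T) ∧ (∀ a ∈ T, ∀ b ∈ T, a ⊔ b ∈ T)}

/-- A collection `S` of subspaces of `W` is distributive if the sublattice of subspaces
it generates is distributive. -/
def IsDistributiveCollection {K W : Type*} [Field K] [AddCommGroup W] [Module K W]
    (S : Set (Submodule K W)) : Prop :=
  ∀ a ∈ sublatticeGen S, ∀ b ∈ sublatticeGen S, ∀ c ∈ sublatticeGen S,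
    a ⊓ (b ⊔ c) = (a ⊓ b) ⊔ (a ⊓ c)

/-!
If `B` is a basis with `span (B ∩ Xᵢ) = Xᵢ`, every member of the generated sublattice is the span
of a subset of `B`, and on subsets of a linearly independent set `span` preserves both `∪` and
`∩`; so the sublattice is a lattice-homomorphic image of a Boolean algebra, hence distributive.

Conversely, a distributive lattice generated by finitely many elements is finite. For each member
`U` choose a complement `C U`, inside `U`, of the sum of the members strictly below `U`. By
well-founded induction `U` is the sum of the `C V` with `V ≤ U`. The family `C` is independent:
for a maximal `m` among finitely many indices, distributivity gives
`m ⊓ ⨆ e = ⨆ (m ⊓ e)`, and every `m ⊓ e` lies strictly below `m`, so `C m` meets `⨆ C e`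
trivially. Bases of the `C U`, united and extended to a basis of `W`, give `B`.
-/

open Submodule Set

theorem sublatticeGen_eq_latticeClosure {K W : Type*} [Field K] [AddCommGroup W] [Module K W]
    (S : Set (Submodule K W)) : sublatticeGen S = latticeClosure S := by
  refine subset_antisymm (sInter_subset_of_mem ⟨subset_latticeClosure,
    fun _ ha _ hb => isSublattice_latticeClosure.infClosed ha hb,
    fun _ ha _ hb => isSublattice_latticeClosure.supClosed ha hb⟩) (latticeClosure_min ?_ ?_)
  · exact fun U hU => mem_sInter.2 fun T hT => hT.1 hU
  · exact ⟨fun a ha b hb => mem_sInter.2 fun T hT => hT.2.2 a (ha T hT) b (hb T hT),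
      fun a ha b hb => mem_sInter.2 fun T hT => hT.2.1 a (ha T hT) b (hb T hT)⟩

theorem LinearIndepOn.span_inf_span {R M : Type*} [Ring R] [AddCommGroup M] [Module R M]
    {B s t : Set M} (hB : LinearIndepOn R id B) (hs : s ⊆ B) (ht : t ⊆ B) :
    span R s ⊓ span R t = span R (s ∩ t) := by
  have hdisj : Disjoint (span R (s \ t)) (span R t) :=
    ((linearIndepOn_id_union_iff disjoint_sdiff_left).1
      (hB.mono (union_subset (sdiff_subset.trans hs) ht))).2.2
  calc span R s ⊓ span R t = (span R (s ∩ t) ⊔ span R (s \ t)) ⊓ span R t := by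
        rw [← span_union, inter_union_sdiff]
    _ = span R (s ∩ t) ⊔ span R (s \ t) ⊓ span R t :=
        sup_inf_assoc_of_le _ (span_mono inter_subset_right)
    _ = span R (s ∩ t) := by rw [hdisj.eq_bot, sup_bot_eq]

theorem isDistributiveCollection_of_span_inter_eq {K W : Type*} [Field K] [AddCommGroup W]
    [Module K W] {S : Set (Submodule K W)} {B : Set W} (hB : LinearIndepOn K id B)
    (hS : ∀ U ∈ S, span K (B ∩ U) = U) : IsDistributiveCollection S := by
  have hspans : latticeClosure S ⊆ {U | ∃ s ⊆ B, span K s = U} := by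
    refine latticeClosure_min (fun U hU => ⟨_, inter_subset_left, hS U hU⟩) ⟨?_, ?_⟩
    · rintro _ ⟨s, hs, rfl⟩ _ ⟨t, ht, rfl⟩
      exact ⟨s ∪ t, union_subset hs ht, span_union s t⟩
    · rintro _ ⟨s, hs, rfl⟩ _ ⟨t, ht, rfl⟩
      exact ⟨s ∩ t, inter_subset_left.trans hs, (hB.span_inf_span hs ht).symm⟩
  rw [IsDistributiveCollection, sublatticeGen_eq_latticeClosure]
  intro a ha b hb c hc
  obtain ⟨sa, hsa, rfl⟩ := hspans ha
  obtain ⟨sb, hsb, rfl⟩ := hspans hb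
  obtain ⟨sc, hsc, rfl⟩ := hspans hc
  rw [← span_union, hB.span_inf_span hsa (union_subset hsb hsc), inter_union_distrib_left,
    span_union, hB.span_inf_span hsa hsb, hB.span_inf_span hsa hsc]

theorem LatticeHom.apply_inf_finsetSup {D α : Type*} [DistribLattice D] [Lattice α] [OrderBot α]
    (φ : LatticeHom D α) (a : D) (t : Finset D) :
    φ a ⊓ t.sup φ = t.sup fun e => φ (a ⊓ e) := by
  rcases t.eq_empty_or_nonempty with rfl | ht
  · simp
  calc φ a ⊓ t.sup φ = φ a ⊓ φ (t.sup' ht id) := by rw [map_finset_sup', Finset.sup'_eq_sup]; rfl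
    _ = φ (t.sup' ht fun e => a ⊓ e) := by
        rw [← InfHomClass.map_inf, Finset.sup'_inf_distrib_left]; rfl
    _ = t.sup fun e => φ (a ⊓ e) := by rw [map_finset_sup', Finset.sup'_eq_sup]; rfl

section CompleteLattice

variable {D α : Type*} [CompleteLattice α]

theorem iSup_le_eq_of_sup_eq [PartialOrder D] [WellFoundedLT D] {φ C : D → α}
    (hφ : Monotone φ) (hC : ∀ d, (⨆ e < d, φ e) ⊔ C d = φ d) (d : D) :
    ⨆ e ≤ d, C e = φ d := by
  induction d using WellFoundedLT.induction with
  | _ d ih =>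
  refine le_antisymm (iSup₂_le fun e he => (le_sup_right.trans (hC e).le).trans (hφ he)) ?_
  rw [← hC d]
  refine sup_le (iSup₂_le fun e he => ?_) (le_iSup₂_of_le d le_rfl le_rfl)
  rw [← ih e he]
  exact iSup₂_mono' fun f hf => ⟨f, hf.trans he.le, le_rfl⟩

variable [DistribLattice D]

theorem disjoint_finsetSup_of_disjoint_iSup_lt (φ : LatticeHom D α) {C : D → α}
    (hC : ∀ d, C d ≤ φ d) (hdisj : ∀ d, Disjoint (⨆ e < d, φ e) (C d)) {m : D} {t : Finset D}
    (hm : ∀ e ∈ t, ¬ m ≤ e) : Disjoint (C m) (t.sup C) := by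
  have hlt : t.sup (fun e => φ (m ⊓ e)) ≤ ⨆ e < m, φ e :=
    Finset.sup_le fun e he => le_iSup₂_of_le (m ⊓ e) (inf_lt_left.2 (hm e he)) le_rfl
  rw [disjoint_iff_inf_le]
  calc C m ⊓ t.sup C ≤ C m ⊓ (φ m ⊓ t.sup φ) :=
        le_inf inf_le_left (inf_le_inf (hC m) (Finset.sup_mono_fun fun e _ => hC e))
    _ ≤ C m ⊓ ⨆ e < m, φ e := by rw [φ.apply_inf_finsetSup]; exact inf_le_inf_left _ hlt
    _ ≤ ⊥ := (hdisj m).symm.le_bot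

theorem iSupIndep_of_disjoint_iSup_lt [IsModularLattice α] [Finite D] (φ : LatticeHom D α)
    {C : D → α} (hC : ∀ d, C d ≤ φ d) (hdisj : ∀ d, Disjoint (⨆ e < d, φ e) (C d)) :
    iSupIndep C := by
  classical
  have := Fintype.ofFinite D
  rw [iSupIndep_iff_supIndep_univ]
  induction (Finset.univ : Finset D) using Finset.strongInduction with
  | H F ih =>
  rcases F.eq_empty_or_nonempty with rfl | hF
  · exact Finset.supIndep_empty C
  obtain ⟨m, hm, hmax⟩ := F.exists_maximal hF
  rw [← Finset.insert_erase hm]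
  refine (ih _ (Finset.erase_ssubset hm)).insert
    (disjoint_finsetSup_of_disjoint_iSup_lt φ hC hdisj fun e he hme => ?_)
  exact Finset.ne_of_mem_erase he (le_antisymm (hmax (Finset.mem_of_mem_erase he) hme) hme)

theorem LatticeHom.exists_iSupIndep_iSup_le_eq [IsModularLattice α] [ComplementedLattice α]
    [Finite D] (φ : LatticeHom D α) : ∃ C : D → α, iSupIndep C ∧ ∀ d, ⨆ e ≤ d, C e = φ d := by
  have hφ : Monotone φ := OrderHomClass.mono φ
  choose C hdisj hsup using fun d =>
    IsModularLattice.exists_disjoint_and_sup_eq (iSup₂_le fun e (he : e < d) => hφ he.le)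
  have hC : ∀ d, C d ≤ φ d := fun d => le_sup_right.trans (hsup d).le
  exact ⟨C, iSupIndep_of_disjoint_iSup_lt φ hC hdisj, iSup_le_eq_of_sup_eq hφ hsup⟩

end CompleteLattice

section VectorSpace

variable {K W : Type*} [Field K] [AddCommGroup W] [Module K W]

theorem iSupIndep.exists_linearIndepOn_span_inter_eq {ι : Type*} {C : ι → Submodule K W}
    (hC : iSupIndep C) :
    ∃ B : Set W, LinearIndepOn K id B ∧ span K B = ⊤ ∧ ∀ i, span K (B ∩ C i) = C i := by
  choose b hbC hbspan hbli using fun i => exists_linearIndependent K (C i : Set W)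
  simp only [span_eq] at hbspan
  have hli : LinearIndepOn K id (⋃ i, b i) := by
    refine linearIndepOn_id_iUnion_finite hbli fun i t _ hi => ?_
    simp only [hbspan]
    exact (hC i).mono_right (iSup₂_mono' fun j hj => ⟨j, fun (h : j = i) => hi (h ▸ hj), le_rfl⟩)
  refine ⟨hli.extend (subset_univ _), hli.linearIndepOn_extend _,
    by rw [hli.span_extend_eq_span, span_univ], fun i => le_antisymm
      (span_le.2 inter_subset_right) ?_⟩
  exact (hbspan i).ge.trans <|
    span_mono (subset_inter ((subset_iUnion b i).trans (hli.subset_extend _)) (hbC i))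

theorem LatticeHom.exists_linearIndepOn_span_inter_eq {D : Type*} [DistribLattice D] [Finite D]
    (φ : LatticeHom D (Submodule K W)) :
    ∃ B : Set W, LinearIndepOn K id B ∧ span K B = ⊤ ∧ ∀ d, span K (B ∩ φ d) = φ d := by
  obtain ⟨C, hC, hφ⟩ := φ.exists_iSupIndep_iSup_le_eq
  obtain ⟨B, hli, hspan, hB⟩ := hC.exists_linearIndepOn_span_inter_eq
  refine ⟨B, hli, hspan, fun d => le_antisymm (span_le.2 inter_subset_right) ?_⟩
  rw [← hφ d]
  exact iSup₂_le fun e he => (hB e).ge.trans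
    (span_mono (inter_subset_inter_right _ (SetLike.coe_mono (le_iSup₂_of_le e he le_rfl))))

theorem exists_linearIndepOn_span_inter_eq_of_isDistributiveCollection
    {S : Set (Submodule K W)} (hS : S.Finite) (hd : IsDistributiveCollection S) :
    ∃ B : Set W, LinearIndepOn K id B ∧ span K B = ⊤ ∧ ∀ U ∈ S, span K (B ∩ U) = U := by
  rw [IsDistributiveCollection, sublatticeGen_eq_latticeClosure] at hd
  let L : Sublattice (Submodule K W) :=
    ⟨latticeClosure S, isSublattice_latticeClosure.supClosed, isSublattice_latticeClosure.infClosed⟩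
  let _ : DistribLattice L := .ofInfSupLe fun a b c => (hd a a.2 b b.2 c c.2).le
  -- Inside the distributive lattice `L`, the closure of `S` is everything, and it is finite.
  have : Finite L := by
    refine finite_univ_iff.1 ((hS.preimage Subtype.val_injective.injOn).latticeClosure.subset
      fun x _ => ?_)
    obtain ⟨y, hy, hyx⟩ : x.1 ∈ Subtype.val '' latticeClosure (Subtype.val ⁻¹' S : Set L) := by
      rw [image_latticeClosure _ _ (fun _ _ => rfl) (fun _ _ => rfl),
        image_preimage_eq_of_subset fun U hU => ⟨⟨U, subset_latticeClosure hU⟩, rfl⟩]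
      exact x.2
    exact Subtype.ext hyx ▸ hy
  obtain ⟨B, hli, hspan, hB⟩ := L.subtype.exists_linearIndepOn_span_inter_eq
  exact ⟨B, hli, hspan, fun U hU => hB ⟨U, subset_latticeClosure hU⟩⟩

end VectorSpace

/-- A finite collection `X₁,…,X_z` of subspaces of a `K`-vector space `W`
is distributive iff there is a basis `B` of `W` such that `B ∩ Xᵢ` is a basis of `Xᵢ`
for every `i`. -/
theorem distributive_iff_basis_intersecting
    {K W : Type*} [Field K] [AddCommGroup W] [Module K W]
    {z : ℕ} (X : Fin z → Submodule K W) :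
    IsDistributiveCollection (Set.range X) ↔
      ∃ B : Set W, LinearIndependent K (fun b : B => (b : W)) ∧ Submodule.span K B = ⊤ ∧
        ∀ i : Fin z,
          LinearIndependent K (fun b : (B ∩ (X i : Set W) : Set W) => (b : W)) ∧
          Submodule.span K (B ∩ (X i : Set W)) = X i := by
  constructor
  · intro hd
    obtain ⟨B, hli, hspan, hB⟩ :=
      exists_linearIndepOn_span_inter_eq_of_isDistributiveCollection (finite_range X) hd
    exact ⟨B, hli, hspan, fun i => ⟨hli.mono inter_subset_left, hB _ (mem_range_self i)⟩⟩
  · rintro ⟨B, hli, -, hB⟩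
    exact isDistributiveCollection_of_span_inter_eq hli (forall_mem_range.2 fun i => (hB i).2)
end
end
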